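/- For every positive integer k, the function F(x) = -∑_{i=0}^{k-1} [ (2k-1)!! / ((2k-2i-1)!! (2k-2i)) x^{2k-2i} - (2k-1)!!/(2k-2i) ] satisfies F''(x) - x F'(x) = x^{2k} - (2k-1)!!. -/

import Mathlib

/-! Writing `F = C - ∑_{j<k} b_j x^{2j+2}` and using `L x^n = n(n-1) x^{n-2} - n x^n` for
`L f = f'' - x f'`, the coefficients `b_j = (2k-1)!! / ((2j+1)!! (2j+2))` are exactly those for
which `L F` telescopes: `L F = ∑_{j<k} (g (j+1) - g j)` with `g j = (2k-1)!! / (2j-1)!! · x^{2j}`,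
so `L F = g k - g 0 = x^{2k} - (2k-1)!!`. -/

/-- Double factorial: `n!! = n (n-2) (n-4) ⋯`, with `0!! = 1!! = 1`. -/
def dfac : ℕ → ℕ
  | 0 => 1
  | 1 => 1
  | (n + 2) => (n + 2) * dfac n

open Finset

lemma dfac_pos : ∀ n, 0 < dfac n
  | 0 | 1 => Nat.one_pos
  | n + 2 => Nat.mul_pos (by omega) (dfac_pos n)

/-- Also true at `j = 0`, where the truncated `2 * 0 - 1 = 0` gives `dfac 0 = 1`. -/
lemma dfac_two_mul_add_one (j : ℕ) : dfac (2 * j + 1) = (2 * j + 1) * dfac (2 * j - 1) := by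
  cases j with
  | zero => rfl
  | succ j => rw [show 2 * (j + 1) + 1 = 2 * j + 1 + 2 by ring, dfac]; congr 2

noncomputable def steinOU (f : ℝ → ℝ) (x : ℝ) : ℝ :=
  deriv (deriv f) x - x * deriv f x

lemma hasDerivAt_sum_mul_pow_succ {ι : Type*} (s : Finset ι) (b : ι → ℝ) (n : ι → ℕ) (x : ℝ) :
    HasDerivAt (fun y => ∑ i ∈ s, b i * y ^ (n i + 1))
      (∑ i ∈ s, b i * ((n i + 1) * x ^ n i)) x := by
  refine HasDerivAt.fun_sum fun i _ => ?_
  simpa using (hasDerivAt_pow (n i + 1) x).const_mul (b i)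

lemma steinOU_const_sub_sum_even_pow (C : ℝ) (b : ℕ → ℝ) (k : ℕ) (x : ℝ) :
    steinOU (fun y => C - ∑ j ∈ range k, b j * y ^ (2 * j + 2)) x
      = ∑ j ∈ range k, b j * (2 * j + 2) * (x ^ (2 * j + 2) - (2 * j + 1) * x ^ (2 * j)) := by
  have hderiv : deriv (fun y => C - ∑ j ∈ range k, b j * y ^ (2 * j + 2))
      = fun y => -∑ j ∈ range k, b j * ((2 * j + 2) * y ^ (2 * j + 1)) := by
    funext y
    have h := (hasDerivAt_sum_mul_pow_succ (range k) b (fun j => 2 * j + 1) y).const_sub C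
    push_cast at h
    simpa only [add_assoc, one_add_one_eq_two] using h.deriv
  have hderiv2 : deriv (fun y => -∑ j ∈ range k, b j * ((2 * j + 2) * y ^ (2 * j + 1))) x
      = -∑ j ∈ range k, b j * (2 * j + 2) * ((2 * j + 1) * x ^ (2 * j)) := by
    have h := (hasDerivAt_sum_mul_pow_succ (range k) (fun j => b j * (2 * j + 2))
      (fun j => 2 * j) x).fun_neg
    push_cast at h
    simpa only [mul_assoc] using h.deriv
  rw [steinOU, hderiv, hderiv2, mul_neg, mul_sum, sub_neg_eq_add, neg_add_eq_sub,
    ← sum_sub_distrib]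
  refine sum_congr rfl fun j _ => ?_
  ring

/-- Reindexing `i ↦ k - 1 - i` puts the solution in the form `C - ∑_{j<k} b_j x^{2j+2}`. -/
lemma sum_range_stein_term_reflect (k : ℕ) (x : ℝ) :
    -∑ i ∈ range k,
        ((dfac (2 * k - 1) : ℝ) / ((dfac (2 * k - 2 * i - 1) : ℝ) * (2 * k - 2 * i : ℝ))
            * x ^ (2 * k - 2 * i)
          - (dfac (2 * k - 1) : ℝ) / (2 * k - 2 * i : ℝ))
      = ∑ j ∈ range k, (dfac (2 * k - 1) : ℝ) / (2 * j + 2)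
        - ∑ j ∈ range k, (dfac (2 * k - 1) : ℝ) / ((dfac (2 * j + 1) : ℝ) * (2 * j + 2))
            * x ^ (2 * j + 2) := by
  rw [← sum_range_reflect, ← sum_sub_distrib, ← sum_neg_distrib]
  refine sum_congr rfl fun j hj => ?_
  have hjk : j < k := mem_range.1 hj
  have hexp : 2 * k - 2 * (k - 1 - j) = 2 * j + 2 := by omega
  have hodd : 2 * k - 2 * (k - 1 - j) - 1 = 2 * j + 1 := by omega
  have hcast : (2 * k - 2 * (k - 1 - j : ℕ) : ℝ) = 2 * j + 2 := by
    rw [Nat.cast_sub (by omega), Nat.cast_sub (by omega)]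
    push_cast
    ring
  rw [hodd, hexp, hcast]
  ring

lemma stein_term_eq_sub (D x : ℝ) (j : ℕ) :
    D / ((dfac (2 * j + 1) : ℝ) * (2 * j + 2)) * (2 * j + 2)
        * (x ^ (2 * j + 2) - (2 * j + 1) * x ^ (2 * j))
      = D / (dfac (2 * (j + 1) - 1) : ℝ) * x ^ (2 * (j + 1))
        - D / (dfac (2 * j - 1) : ℝ) * x ^ (2 * j) := by
  have hdfac : (dfac (2 * j - 1) : ℝ) ≠ 0 := by exact_mod_cast (dfac_pos _).ne'
  rw [show 2 * (j + 1) - 1 = 2 * j + 1 by omega, show 2 * (j + 1) = 2 * j + 2 by ring,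
    dfac_two_mul_add_one]
  push_cast
  field_simp

theorem stmt_3_general (k : ℕ) (F : ℝ → ℝ)
    (hF : ∀ x : ℝ, F x =
      -∑ i ∈ Finset.range k,
        ((dfac (2 * k - 1) : ℝ) / ((dfac (2 * k - 2 * i - 1) : ℝ) * (2 * k - 2 * i : ℝ))
            * x ^ (2 * k - 2 * i)
          - (dfac (2 * k - 1) : ℝ) / (2 * k - 2 * i : ℝ))) :
    ∀ x : ℝ,
      deriv (deriv F) x - x * deriv F x = x ^ (2 * k) - (dfac (2 * k - 1) : ℝ) := by
  intro x
  have hdfac : (dfac (2 * k - 1) : ℝ) ≠ 0 := by exact_mod_cast (dfac_pos _).ne'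
  rw [← steinOU, funext fun y => (hF y).trans (sum_range_stein_term_reflect k y),
    steinOU_const_sub_sum_even_pow, sum_congr rfl fun j _ => stein_term_eq_sub _ x j,
    sum_range_sub (fun j => (dfac (2 * k - 1) : ℝ) / (dfac (2 * j - 1) : ℝ) * x ^ (2 * j))]
  simp [hdfac, dfac]

/-- The explicit polynomial solves the Ornstein-Uhlenbeck Stein equation for
`h(x) = x^(2k)`, whose standard normal expectation is `(2k-1)!!`. -/
theorem stmt_3 (k : ℕ) (hk : 0 < k) (F : ℝ → ℝ)
    (hF : ∀ x : ℝ, F x =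
      -∑ i ∈ Finset.range k,
        ((dfac (2 * k - 1) : ℝ) / ((dfac (2 * k - 2 * i - 1) : ℝ) * (2 * k - 2 * i : ℝ))
            * x ^ (2 * k - 2 * i)
          - (dfac (2 * k - 1) : ℝ) / (2 * k - 2 * i : ℝ))) :
    ∀ x : ℝ,
      deriv (deriv F) x - x * deriv F x = x ^ (2 * k) - (dfac (2 * k - 1) : ℝ) :=
  stmt_3_general k F hF
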